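/- arXiv:1009.2369 — 3 statements merged into one kernel-verified Lean document; each statement's English description precedes it below -/
import Mathlib

section
/- Let X be a complex Banach space and let (x_k)_{k∈ℕ} be a family of vectors in X such that for every nonzero α ∈ ℓ¹(ℕ, ℂ) the sum ∑_k α_k x_k ≠ 0 (condition (C3)). Then for every doubly-indexed family b ∈ ℓ¹(ℕ², ℂ): if for every continuous linear functional f on X, ∑_{k₁,k₂} b_{k₁,k₂} f(x_{k₂}) x_{k₁} = 0 in X, then b = 0. -/
/-!
A family `x` satisfying (C3) is bounded: by Banach–Steinhaus applied to the coordinate maps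
`α ↦ α k • x k` on `ℓ¹`, which are pointwise bounded because (C3) forces every series
`∑ α k • x k` with `α ∈ ℓ¹` to converge. Boundedness makes the double series absolutely
summable, so it can be summed row by row: contracting with `f` gives `∑ k₁, β k₁ • x k₁` with
`β k₁ = ∑ k₂, b (k₁, k₂) * f (x k₂)` in `ℓ¹`, and (C3) yields `β = 0`. Thus `f` kills
`∑ k₂, b (k₁, k₂) • x k₂` for every `f`, so by Hahn–Banach this vector is `0`, and (C3) once more
makes every row of `b` vanish.
-/

section

variable {ι 𝕜 E : Type*} [NontriviallyNormedField 𝕜] [NormedAddCommGroup E] [NormedSpace 𝕜 E]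

variable (𝕜) in
/-- Condition (C3) of the paper. -/
def L1Independent (x : ι → E) : Prop :=
  ∀ α : ι → 𝕜, Summable (fun k => ‖α k‖) → α ≠ 0 → (∑' k, α k • x k) ≠ 0

namespace L1Independent

variable {x : ι → E} {α : ι → 𝕜}

/-- A divergent series would have the junk sum `0`, which (C3) forbids. -/
theorem summable_smul (hx : L1Independent 𝕜 x) (hα : Summable fun k => ‖α k‖) :
    Summable fun k => α k • x k := by
  by_cases hα0 : α = 0
  · simp [hα0, summable_zero]
  · by_contra hdiv
    exact hx α hα hα0 (tsum_eq_zero_of_not_summable hdiv)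

theorem eq_zero_of_tsum_eq_zero (hx : L1Independent 𝕜 x) (hα : Summable fun k => ‖α k‖)
    (h : ∑' k, α k • x k = 0) : α = 0 := by
  by_contra hα0
  exact hx α hα hα0 h

theorem exists_norm_le [CompleteSpace 𝕜] (hx : L1Independent 𝕜 x) : ∃ C, ∀ k, ‖x k‖ ≤ C := by
  classical
  let T : ι → lp (fun _ : ι => 𝕜) 1 →L[𝕜] E := fun k =>
    (lp.evalCLM 𝕜 (fun _ : ι => 𝕜) 1 k).smulRight (x k)
  have hT : ∀ α : lp (fun _ : ι => 𝕜) 1, ∃ C, ∀ k, ‖T k α‖ ≤ C := fun α => by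
    have hα : Summable fun k => ‖α k‖ := by simpa using (lp.memℓp α).summable (by simp)
    obtain ⟨C, hC⟩ := (hx.summable_smul hα).tendsto_cofinite_zero.norm.bddAbove_range_of_cofinite
    exact ⟨C, fun k => hC ⟨k, rfl⟩⟩
  obtain ⟨C, hC⟩ := banach_steinhaus hT
  refine ⟨C, fun k => ?_⟩
  have hsingle : T k (lp.single 1 k 1) = x k := by
    simp [T, lp.evalCLM]
  calc ‖x k‖ = ‖T k (lp.single 1 k 1)‖ := by rw [hsingle]
    _ ≤ ‖T k‖ * ‖lp.single (E := fun _ : ι => 𝕜) 1 k (1 : 𝕜)‖ := (T k).le_opNorm _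
    _ ≤ C := by rw [lp.norm_single zero_lt_one, norm_one, mul_one]; exact hC k

end L1Independent

theorem Summable.norm_prod {β γ F : Type*} [NormedAddCommGroup F] {f : β × γ → F}
    (hf : Summable fun p => ‖f p‖) : Summable fun b => ‖∑' c, f (b, c)‖ :=
  .of_nonneg_of_le (fun _ => norm_nonneg _)
    (fun b => norm_tsum_le_tsum_norm (hf.prod_factor b)) hf.prod

theorem tsum_prod_smul_fst {β γ : Type*} [CompleteSpace 𝕜] [CompleteSpace E] {x : β → E} {C : ℝ}
    (hx : ∀ b, ‖x b‖ ≤ C) {a : β × γ → 𝕜} (ha : Summable fun p => ‖a p‖) :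
    ∑' p, a p • x p.1 = ∑' b, (∑' c, a (b, c)) • x b := by
  have hsum : Summable fun p => a p • x p.1 :=
    .of_norm_bounded (ha.mul_right C) fun p => by
      rw [norm_smul]; exact mul_le_mul_of_nonneg_left (hx _) (norm_nonneg _)
  rw [hsum.tsum_prod' hsum.prod_factor]
  exact tsum_congr fun b => (ha.prod_factor b).of_norm.tsum_smul_const (x b)

end

/-- under condition (C3), contraction against continuous linear
functionals detects vanishing of doubly-indexed ℓ¹ coefficient families. -/
theorem stmt2 (X : Type*) [NormedAddCommGroup X] [NormedSpace ℂ X] [CompleteSpace X]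
    (x : ℕ → X)
    (hC3 : ∀ α : ℕ → ℂ, Summable (fun k => ‖α k‖) → α ≠ 0 →
      (∑' k, α k • x k) ≠ 0)
    (b : ℕ × ℕ → ℂ) (hb : Summable fun p => ‖b p‖)
    (h : ∀ f : X →L[ℂ] ℂ, (∑' p : ℕ × ℕ, (b p * f (x p.2)) • x p.1) = 0) :
    b = 0 := by
  have hx : L1Independent ℂ x := hC3
  obtain ⟨C, hC⟩ := hx.exists_norm_le
  have hrow : ∀ k₁, Summable fun k₂ => ‖b (k₁, k₂)‖ := hb.prod_factor
  have hcontract : ∀ (f : X →L[ℂ] ℂ) k₁, ∑' k₂, b (k₁, k₂) * f (x k₂) = 0 := by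
    intro f
    have hbf : Summable fun p : ℕ × ℕ => ‖b p * f (x p.2)‖ :=
      .of_nonneg_of_le (fun _ => norm_nonneg _) (fun p => by
        rw [norm_mul]
        exact mul_le_mul_of_nonneg_left ((f.le_opNorm _).trans (by gcongr; exact hC _))
          (norm_nonneg _)) (hb.mul_right (‖f‖ * C))
    refine congrFun (hx.eq_zero_of_tsum_eq_zero hbf.norm_prod ?_)
    rw [← tsum_prod_smul_fst hC hbf, h f]
  funext p
  refine congrFun (hx.eq_zero_of_tsum_eq_zero (hrow p.1) ?_) p.2
  refine SeparatingDual.eq_zero_of_forall_dual_eq_zero (R := ℂ) fun f => ?_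
  rw [f.map_tsum (hx.summable_smul (hrow p.1))]
  simpa using hcontract f p.1
end

section
/- Let {q_k} enumerate [0,1) ∩ ℚ, {r_m} enumerate ℤ, a > 1/2, and e_{a,k} = √(2a-1) ∑_m e^{i2π q_k r_m} m^{a-1} e_m ∈ E*. Then for any α ∈ ℓ¹(ℕ, ℂ) with α ≠ 0, the sum ∑_k α_k e_{a,k} is nonzero in E*; equivalently, there exists m with ∑_k α_k e^{i2π q_k r_m} ≠ 0. -/
/-!
The coordinates `∑_k α_k e^{2πi q_k r_m}` include all moments `∑_k α_k z_kⁿ`, `n ≥ 0`, of the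
distinct unit complex numbers `z_k = e^{-2πi q_k}`. If all of them vanish, so do their Cesàro
averages against `z_j⁻ⁿ`; as `N → ∞` the average `N⁻¹ ∑_{n<N} (z_k / z_j)ⁿ` tends to `1` for
`k = j` and to `0` otherwise, and dominated convergence (with `∑ ‖α_k‖ < ∞`) gives `α_j = 0`.
-/

open Filter Topology Finset Real

/-- The enumeration `r 1 = 0, r 2 = 1, r 3 = -1, r 4 = 2, r 5 = -2, ...` of ℤ. -/
def statement7R (m : ℕ) : ℤ := if m % 2 = 0 then (m / 2 : ℤ) else -((m / 2 : ℤ))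

section PowAverage

variable {𝕜 : Type*} [RCLike 𝕜]

def powAverage (w : 𝕜) (N : ℕ) : 𝕜 := (N : 𝕜)⁻¹ * ∑ n ∈ range N, w ^ n

lemma norm_powAverage_le_one {w : 𝕜} (hw : ‖w‖ ≤ 1) (N : ℕ) : ‖powAverage w N‖ ≤ 1 := by
  rcases N.eq_zero_or_pos with rfl | hN
  · simp [powAverage]
  have hsum : ‖∑ n ∈ range N, w ^ n‖ ≤ N :=
    calc ‖∑ n ∈ range N, w ^ n‖ ≤ ∑ n ∈ range N, ‖w ^ n‖ := norm_sum_le _ _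
      _ ≤ ∑ n ∈ range N, (1 : ℝ) := sum_le_sum fun n _ => by
            rw [norm_pow]; exact pow_le_one₀ (norm_nonneg w) hw
      _ = N := by simp
  rw [powAverage, norm_mul, norm_inv, RCLike.norm_natCast]
  exact inv_mul_le_one_of_le₀ hsum (Nat.cast_nonneg N)

lemma tendsto_powAverage_one : Tendsto (powAverage (1 : 𝕜)) atTop (𝓝 1) := by
  refine tendsto_const_nhds.congr' ?_
  filter_upwards [eventually_ne_atTop 0] with N hN
  simp [powAverage, hN]

-- By the geometric sum formula, `‖∑_{n<N} wⁿ‖ ≤ 2 / ‖w - 1‖` stays bounded.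
lemma tendsto_powAverage_zero {w : 𝕜} (hw : ‖w‖ ≤ 1) (hw1 : w ≠ 1) :
    Tendsto (powAverage w) atTop (𝓝 0) := by
  have hbound (N : ℕ) : ‖powAverage w N‖ ≤ 2 / ‖w - 1‖ / N := by
    have hgeom : ‖w ^ N - 1‖ ≤ 2 :=
      calc ‖w ^ N - 1‖ ≤ ‖w ^ N‖ + ‖(1 : 𝕜)‖ := norm_sub_le _ _
        _ ≤ 1 + 1 := by
          rw [norm_pow, norm_one]; gcongr; exact pow_le_one₀ (norm_nonneg w) hw
        _ = 2 := by norm_num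
    rw [powAverage, geom_sum_eq hw1, norm_mul, norm_div, norm_inv, RCLike.norm_natCast,
      div_eq_inv_mul _ (N : ℝ)]
    gcongr
  exact squeeze_zero_norm hbound (tendsto_const_div_atTop_nhds_zero_nat _)

end PowAverage

section Circle

variable {ι : Type*} {α : ι → ℂ}

lemma summable_mul_circle_pow (hα : Summable (‖α ·‖)) (z : ι → Circle) (n : ℕ) :
    Summable fun k => α k * (z k : ℂ) ^ n :=
  Summable.of_norm_bounded hα fun k => by simp [Circle.norm_coe]

lemma tsum_mul_powAverage_div_eq_zero (hα : Summable (‖α ·‖)) {z : ι → Circle}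
    (h : ∀ n : ℕ, ∑' k, α k * (z k : ℂ) ^ n = 0) (c : Circle) (N : ℕ) :
    ∑' k, α k * powAverage ((z k / c : Circle) : ℂ) N = 0 :=
  calc ∑' k, α k * powAverage ((z k / c : Circle) : ℂ) N
      = ∑' k, ∑ n ∈ range N, (N : ℂ)⁻¹ * ((c : ℂ) ^ n)⁻¹ * (α k * (z k : ℂ) ^ n) := by
        refine tsum_congr fun k => ?_
        simp only [powAverage, Circle.coe_div, div_pow, mul_sum]
        exact sum_congr rfl fun n _ => by ring
    _ = ∑ n ∈ range N, (N : ℂ)⁻¹ * ((c : ℂ) ^ n)⁻¹ * ∑' k, α k * (z k : ℂ) ^ n := by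
        rw [Summable.tsum_finsetSum fun n _ => (summable_mul_circle_pow hα z n).mul_left _]
        simp only [tsum_mul_left]
    _ = 0 := by simp [h]

lemma tendsto_tsum_mul_powAverage_div (hα : Summable (‖α ·‖)) {z : ι → Circle}
    (hz : Function.Injective z) (j : ι) :
    Tendsto (fun N => ∑' k, α k * powAverage ((z k / z j : Circle) : ℂ) N) atTop (𝓝 (α j)) := by
  classical
  rw [← tsum_ite_eq j α]
  refine tendsto_tsum_of_dominated_convergence hα (fun k => ?_) (.of_forall fun N k => ?_)
  · by_cases hkj : k = j
    · subst hkj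
      simpa using (tendsto_powAverage_one (𝕜 := ℂ)).const_mul (α k)
    · have hne : ((z k / z j : Circle) : ℂ) ≠ 1 := by
        rw [Ne, Circle.coe_eq_one, div_eq_one]
        exact hz.ne hkj
      simpa [hkj] using (tendsto_powAverage_zero (Circle.norm_coe _).le hne).const_mul (α k)
  · rw [norm_mul]
    exact mul_le_of_le_one_right (norm_nonneg _) (norm_powAverage_le_one (Circle.norm_coe _).le N)

theorem Circle.eq_zero_of_forall_tsum_mul_pow_eq_zero (hα : Summable (‖α ·‖)) {z : ι → Circle}
    (hz : Function.Injective z) (h : ∀ n : ℕ, ∑' k, α k * (z k : ℂ) ^ n = 0) : α = 0 := by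
  ext j
  refine tendsto_nhds_unique (tendsto_tsum_mul_powAverage_div hα hz j) ?_
  simpa only [tsum_mul_powAverage_div_eq_zero hα h, Pi.zero_apply] using tendsto_const_nhds

end Circle

lemma statement7R_two_mul_add_one (n : ℕ) : statement7R (2 * n + 1) = -n := by
  unfold statement7R
  split_ifs <;> omega

lemma injOn_circleExp_two_pi_mul :
    Set.InjOn (fun x : ℝ => Circle.exp (2 * π * x)) (Set.Ico 0 1) :=
  (Circle.exp_injOn_Ico (a := 0) (b := 2 * π) (by simp)).comp
    (mul_right_injective₀ (by positivity)).injOn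
    fun x hx => ⟨by nlinarith [hx.1, pi_pos], by nlinarith [hx.2, pi_pos]⟩

lemma coe_inv_circleExp_pow (x : ℝ) (n : ℕ) :
    (((Circle.exp x)⁻¹ : Circle) : ℂ) ^ n = Complex.exp (Complex.I * x * ((-n : ℤ) : ℂ)) := by
  rw [← Circle.coe_pow, ← Circle.exp_neg, ← Circle.exp_nsmul, Circle.coe_exp]
  push_cast
  ring_nf

theorem stmt7_general (q : ℕ → ℚ) (hq_inj : Function.Injective q)
    (hq_mem : ∀ k, 0 ≤ q k ∧ q k < 1)
    (α : ℕ → ℂ) (hα : Summable fun k => ‖α k‖) (hα0 : α ≠ 0) :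
    ∃ m : ℕ, 1 ≤ m ∧
      (∑' k, α k *
        Complex.exp (Complex.I * 2 * Real.pi * (q k : ℂ) * (statement7R m : ℂ))) ≠ 0 := by
  by_contra! hcon
  have hq_Ico (k : ℕ) : (q k : ℝ) ∈ Set.Ico 0 1 :=
    ⟨by exact_mod_cast (hq_mem k).1, by exact_mod_cast (hq_mem k).2⟩
  have hz : Function.Injective fun k => (Circle.exp (2 * π * q k))⁻¹ :=
    inv_injective.comp fun k l hkl => hq_inj <| Rat.cast_injective (α := ℝ) <|
      injOn_circleExp_two_pi_mul (hq_Ico k) (hq_Ico l) hkl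
  refine hα0 (Circle.eq_zero_of_forall_tsum_mul_pow_eq_zero hα hz fun n => ?_)
  -- `m = 2n + 1` gives `r_m = -n`, hence the moment `∑ α_k z_kⁿ` with `z_k = e^{-2πi q_k}`.
  have hm := hcon (2 * n + 1) (by omega)
  rw [statement7R_two_mul_add_one] at hm
  simp only [coe_inv_circleExp_pow]
  convert hm using 5
  push_cast
  ring

/-- condition (C3) for the Accardi–Ji–Saito example: any nonzero
ℓ¹ combination of the `e_{a,k}` has a nonvanishing coordinate, i.e. there is
`m` with `∑_k α_k e^{2πi q_k r_m} ≠ 0`. -/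
theorem stmt7 (q : ℕ → ℚ) (hq_inj : Function.Injective q)
    (hq_mem : ∀ k, 0 ≤ q k ∧ q k < 1)
    (hq_surj : ∀ x : ℚ, 0 ≤ x → x < 1 → ∃ k, q k = x)
    (a : ℝ) (ha : 1 / 2 < a)
    (α : ℕ → ℂ) (hα : Summable fun k => ‖α k‖) (hα0 : α ≠ 0) :
    ∃ m : ℕ, 1 ≤ m ∧
      (∑' k, α k *
        Complex.exp (Complex.I * 2 * Real.pi * (q k : ℂ) * (statement7R m : ℂ))) ≠ 0 :=
  stmt7_general q hq_inj hq_mem α hα hα0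
end

section
/- Let a > 1/2 and t_N := (1/N^{2a-1}) ∑_{j=1}^N z^{r_j} j^{2a-2} where z is a complex number of modulus 1 with z ≠ 1, and r_1=0, r_2=1, r_3=-1, r_4=2, r_5=-2, .... Assume z is a root of unity of order d ≥ 2. Then t_N → 0 as N → ∞. -/
open scoped BigOperators
open Filter

/-- The enumeration `r 1 = 0, r 2 = 1, r 3 = -1, r 4 = 2, r 5 = -2, ...` of ℤ. -/
def statement18R (m : ℕ) : ℤ := if m % 2 = 0 then (m / 2 : ℤ) else -((m / 2 : ℤ))

/-!
Pairing the terms `j = 2i + 1` and `j = 2i + 2` turns the partial sums of `z ^ r_j` into two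
geometric sums, in `z⁻¹` and in `z`, so they stay bounded by a constant depending on `‖z - 1‖`.
Abel summation bounds the weighted sum by that constant times `|w_N|` plus the total variation of
the weights `w_j = j ^ (2a - 2)`; these are monotone, so the total is `O(N ^ (2a - 2) + 1)`,
which is `o(N ^ (2a - 1))` because `2a - 1 > 0`.
-/

open Finset

lemma norm_geom_sum_le {K : Type*} [NormedDivisionRing K] {x : K} (hx : ‖x‖ = 1) (hx1 : x ≠ 1)
    (n : ℕ) : ‖∑ i ∈ range n, x ^ i‖ ≤ 2 / ‖x - 1‖ := by
  rw [geom_sum_eq hx1, norm_div]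
  gcongr
  calc ‖x ^ n - 1‖ ≤ ‖x ^ n‖ + ‖(1 : K)‖ := norm_sub_le _ _
    _ = 2 := by rw [norm_pow, hx, one_pow, norm_one]; norm_num

lemma norm_sum_range_smul_le {𝕜 E : Type*} [NormedField 𝕜] [NormedAddCommGroup E]
    [NormedSpace 𝕜 E] (f : ℕ → 𝕜) {u : ℕ → E} {B : ℝ}
    (hB : ∀ n, ‖∑ i ∈ range n, u i‖ ≤ B) (N : ℕ) :
    ‖∑ i ∈ range (N + 1), f i • u i‖ ≤ B * (‖f N‖ + ∑ i ∈ range N, ‖f (i + 1) - f i‖) := by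
  rw [sum_range_by_parts, Nat.add_sub_cancel, mul_add, mul_sum]
  refine (norm_sub_le _ _).trans
    (add_le_add ?_ ((norm_sum_le _ _).trans (sum_le_sum fun i _ => ?_)))
  all_goals
    rw [norm_smul, mul_comm]
    exact mul_le_mul_of_nonneg_right (hB _) (norm_nonneg _)

lemma sum_range_abs_sub_eq_abs_sub {g : ℕ → ℝ} (hg : Monotone g ∨ Antitone g) (N : ℕ) :
    ∑ i ∈ range N, |g (i + 1) - g i| = |g N - g 0| := by
  rcases hg with hg | hg
  · rw [abs_of_nonneg (sub_nonneg.2 (hg (Nat.zero_le N))), ← sum_range_sub]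
    exact sum_congr rfl fun i _ => abs_of_nonneg (sub_nonneg.2 (hg i.le_succ))
  · rw [abs_of_nonpos (sub_nonpos.2 (hg (Nat.zero_le N))), ← sum_range_sub, ← sum_neg_distrib]
    exact sum_congr rfl fun i _ => abs_of_nonpos (sub_nonpos.2 (hg i.le_succ))

lemma monotone_or_antitone_natCast_add_one_rpow (c : ℝ) :
    Monotone (fun i : ℕ => ((i : ℝ) + 1) ^ c) ∨ Antitone (fun i : ℕ => ((i : ℝ) + 1) ^ c) := by
  rcases le_total 0 c with hc | hc
  · exact .inl fun i j hij => Real.rpow_le_rpow (by positivity) (by gcongr) hc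
  · exact .inr fun i j hij => Real.rpow_le_rpow_of_nonpos (by positivity) (by gcongr) hc

lemma statement18R_two_mul_add_one (i : ℕ) : statement18R (2 * i + 1) = -i := by
  simp [statement18R]; omega

lemma statement18R_two_mul_add_two (i : ℕ) : statement18R (2 * i + 2) = i + 1 := by
  simp [statement18R]; omega

lemma sum_range_two_mul_zpow_statement18R {K : Type*} [DivisionRing K] (z : K) (m : ℕ) :
    ∑ j ∈ range (2 * m), z ^ statement18R (j + 1) =
      ∑ i ∈ range m, z⁻¹ ^ i + z * ∑ i ∈ range m, z ^ i := by
  induction m with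
  | zero => simp
  | succ m ih =>
    rw [show 2 * (m + 1) = 2 * m + 1 + 1 by ring, sum_range_succ, sum_range_succ, ih,
      statement18R_two_mul_add_one, statement18R_two_mul_add_two, sum_range_succ, sum_range_succ]
    rw [zpow_neg, zpow_natCast, ← inv_pow, show ((m : ℤ) + 1) = ((m + 1 : ℕ) : ℤ) by push_cast; rfl,
      zpow_natCast, pow_succ']
    noncomm_ring

lemma norm_sum_range_zpow_statement18R_le {K : Type*} [NormedDivisionRing K] {z : K}
    (hz : ‖z‖ = 1) (hz1 : z ≠ 1) (n : ℕ) :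
    ‖∑ j ∈ range n, z ^ statement18R (j + 1)‖ ≤ 2 / ‖z⁻¹ - 1‖ + 2 / ‖z - 1‖ + 1 := by
  have hzinv : ‖z⁻¹‖ = 1 := by rw [norm_inv, hz, inv_one]
  have hzinv1 : z⁻¹ ≠ 1 := inv_ne_one.2 hz1
  have heven : ∀ m, ‖∑ j ∈ range (2 * m), z ^ statement18R (j + 1)‖ ≤
      2 / ‖z⁻¹ - 1‖ + 2 / ‖z - 1‖ := fun m => by
    rw [sum_range_two_mul_zpow_statement18R]
    refine (norm_add_le _ _).trans (add_le_add (norm_geom_sum_le hzinv hzinv1 m) ?_)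
    rw [norm_mul, hz, one_mul]
    exact norm_geom_sum_le hz hz1 m
  obtain ⟨m, rfl | rfl⟩ := Nat.even_or_odd' n
  · linarith [heven m]
  · rw [sum_range_succ]
    refine (norm_add_le _ _).trans (add_le_add (heven m) ?_)
    rw [norm_zpow, hz, one_zpow]

lemma norm_sum_Icc_zpow_statement18R_mul_rpow_le {z : ℂ} (hz : ‖z‖ = 1) (hz1 : z ≠ 1)
    (c : ℝ) (N : ℕ) :
    ‖∑ j ∈ Icc 1 (N + 1), z ^ statement18R j * (((j : ℝ) ^ c : ℝ) : ℂ)‖ ≤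
      (2 / ‖z⁻¹ - 1‖ + 2 / ‖z - 1‖ + 1) * (2 * ((N : ℝ) + 1) ^ c + 1) := by
  set g : ℕ → ℝ := fun i => ((i : ℝ) + 1) ^ c with hg
  have hsum : ∑ j ∈ Icc 1 (N + 1), z ^ statement18R j * (((j : ℝ) ^ c : ℝ) : ℂ) =
      ∑ i ∈ range (N + 1), g i • z ^ statement18R (i + 1) := by
    rw [← Ico_add_one_right_eq_Icc, sum_Ico_eq_sum_range, Nat.add_sub_cancel]
    refine sum_congr rfl fun i _ => ?_
    rw [Complex.real_smul, mul_comm, add_comm 1 i]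
    push_cast
    rfl
  have hgN : 0 ≤ g N := by positivity
  have hg0 : g 0 = 1 := by simp [hg]
  have hvar : ∑ i ∈ range N, |g (i + 1) - g i| = |g N - g 0| :=
    sum_range_abs_sub_eq_abs_sub (monotone_or_antitone_natCast_add_one_rpow c) N
  rw [hsum]
  refine (norm_sum_range_smul_le g (norm_sum_range_zpow_statement18R_le hz hz1) N).trans ?_
  simp only [Real.norm_eq_abs]
  rw [hvar, hg0, abs_of_nonneg hgN]
  refine mul_le_mul_of_nonneg_left ?_ (by positivity)
  have hdiff : |g N - 1| ≤ g N + 1 := abs_le.2 ⟨by linarith, by linarith⟩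
  linarith [show g N = ((N : ℝ) + 1) ^ c from rfl]

theorem stmt18_general (a : ℝ) (ha : 1 / 2 < a) (z : ℂ) (hz_norm : ‖z‖ = 1)
    (hz1 : z ≠ 1) :
    Tendsto (fun N : ℕ =>
        ((1 / (N : ℝ) ^ (2 * a - 1) : ℝ) : ℂ) *
          ∑ j ∈ Finset.Icc 1 N, z ^ (statement18R j) * (((j : ℝ) ^ (2 * a - 2) : ℝ) : ℂ))
      atTop (nhds 0) := by
  set C := 2 / ‖z⁻¹ - 1‖ + 2 / ‖z - 1‖ + 1
  have hp : 0 < 2 * a - 1 := by linarith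
  have hbound : Tendsto (fun N : ℕ => C * (2 * (N : ℝ) ^ (-1 : ℝ) + (N : ℝ) ^ (-(2 * a - 1))))
      atTop (nhds 0) := by
    have h := ((tendsto_rpow_neg_atTop one_pos).const_mul 2 |>.add
      (tendsto_rpow_neg_atTop hp)).const_mul C |>.comp tendsto_natCast_atTop_atTop
    simpa [Function.comp_def] using h
  refine squeeze_zero_norm' ?_ hbound
  filter_upwards [eventually_ge_atTop 1] with N hN
  obtain ⟨M, rfl⟩ := Nat.exists_eq_add_of_le' hN
  have hpos : (0 : ℝ) < (M + 1 : ℕ) := by positivity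
  rw [norm_mul, Complex.norm_real, Real.norm_of_nonneg (by positivity)]
  calc 1 / ((M + 1 : ℕ) : ℝ) ^ (2 * a - 1) * ‖∑ j ∈ Icc 1 (M + 1), z ^ statement18R j *
        (((j : ℝ) ^ (2 * a - 2) : ℝ) : ℂ)‖
      ≤ 1 / ((M + 1 : ℕ) : ℝ) ^ (2 * a - 1) * (C * (2 * ((M : ℝ) + 1) ^ (2 * a - 2) + 1)) := by
        gcongr
        exact norm_sum_Icc_zpow_statement18R_mul_rpow_le hz_norm hz1 _ M
    _ = C * (2 * ((M + 1 : ℕ) : ℝ) ^ (-1 : ℝ) + ((M + 1 : ℕ) : ℝ) ^ (-(2 * a - 1))) := by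
        have hdiv : ((M + 1 : ℕ) : ℝ) ^ (-1 : ℝ) =
            ((M + 1 : ℕ) : ℝ) ^ (2 * a - 2) / ((M + 1 : ℕ) : ℝ) ^ (2 * a - 1) := by
          rw [← Real.rpow_sub hpos]; norm_num
        rw [hdiv, Real.rpow_neg hpos.le]
        push_cast
        field_simp

/-- for a root of unity `z ≠ 1` of order `d ≥ 2` and `a > 1/2`,
`N^{-(2a-1)} ∑_{j=1}^N z^{r_j} j^{2a-2} → 0`. -/
theorem stmt18 (a : ℝ) (ha : 1 / 2 < a) (z : ℂ) (hz_norm : ‖z‖ = 1)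
    (hz1 : z ≠ 1) (d : ℕ) (hd : 2 ≤ d) (hzd : z ^ d = 1) :
    Tendsto (fun N : ℕ =>
        ((1 / (N : ℝ) ^ (2 * a - 1) : ℝ) : ℂ) *
          ∑ j ∈ Finset.Icc 1 N, z ^ (statement18R j) * (((j : ℝ) ^ (2 * a - 2) : ℝ) : ℂ))
      atTop (nhds 0) :=
  stmt18_general a ha z hz_norm hz1
end
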